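/- Let I = (-1,1) and let w ∈ L^∞(I) satisfy the strong nondegeneracy property: there exist C > 0 and ε₀ > 0 such that |{x ∈ I : |w(x)+10| ≤ ε}| ≤ C ε for all 0 < ε < ε₀. Let β be the Heaviside-type graph with values β_i for u < -10, [β_i, β_w] at u = -10, and β_w for u > -10. Then for any q ∈ [1,∞) there is C̃ > 0 such that for all ŵ ∈ L^∞(I) and measurable selections z(x) ∈ β(w(x)), ẑ(x) ∈ β(ŵ(x)) a.e., one has ‖z - ẑ‖_{L^q(I)} ≤ (β_w - β_i) · min{ C̃ ‖w - ŵ‖_{L^∞(I)}^{1/q}, 2^{1/q} }. -/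

import Mathlib

/-! Two selections of the Heaviside graph differ by at most `βw - βi`, and they can differ
only where `w` lies within `‖w - ŵ‖_∞` of the jump at `-10`. The nondegeneracy bound, extended
from small levels to all levels, makes that set of measure `O(‖w - ŵ‖_∞)`, and it has measure at
most `|I| = 2` anyway; taking `q`-th roots gives the estimate. -/

open MeasureTheory Set

/-- The Budyko co-albedo graph. -/
def budykoGraph (βi βw : ℝ) : ℝ → Set ℝ := fun u =>
  if u < -10 then {βi} else if u = -10 then Set.Icc βi βw else {βw}

lemma budykoGraph_subset_Icc {βi βw : ℝ} (h : βi ≤ βw) (u : ℝ) :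
    budykoGraph βi βw u ⊆ Icc βi βw := by
  unfold budykoGraph
  split_ifs
  · exact singleton_subset_iff.mpr (left_mem_Icc.mpr h)
  · exact subset_rfl
  · exact singleton_subset_iff.mpr (right_mem_Icc.mpr h)

lemma abs_sub_le_of_mem_budykoGraph {βi βw u uh z zh : ℝ} (h : βi ≤ βw)
    (hz : z ∈ budykoGraph βi βw u) (hzh : zh ∈ budykoGraph βi βw uh) :
    |z - zh| ≤ βw - βi :=
  Real.dist_eq z zh ▸
    Real.dist_le_of_mem_Icc (budykoGraph_subset_Icc h u hz) (budykoGraph_subset_Icc h uh hzh)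

lemma eq_of_mem_budykoGraph_of_abs_sub_lt {βi βw u uh δ z zh : ℝ}
    (hz : z ∈ budykoGraph βi βw u) (hzh : zh ∈ budykoGraph βi βw uh)
    (hd : |u - uh| ≤ δ) (hu : δ < |u + 10|) : z = zh := by
  obtain ⟨hd₁, hd₂⟩ := abs_le.mp hd
  rcases lt_abs.mp hu with hu | hu
  · have h : ¬u < -10 := by linarith
    have hh : ¬uh < -10 := by linarith
    simp only [budykoGraph, if_neg h, if_neg hh, if_neg (show u ≠ -10 by linarith),
      if_neg (show uh ≠ -10 by linarith), mem_singleton_iff] at hz hzh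
    rw [hz, hzh]
  · have h : u < -10 := by linarith
    have hh : uh < -10 := by linarith
    simp only [budykoGraph, if_pos h, if_pos hh, mem_singleton_iff] at hz hzh
    rw [hz, hzh]

lemma ae_abs_le_toReal_eLpNorm_top {α : Type*} [MeasurableSpace α] {μ : Measure α}
    {f : α → ℝ} (hf : MemLp f ⊤ μ) : ∀ᵐ x ∂μ, |f x| ≤ (eLpNorm f ⊤ μ).toReal := by
  rw [eLpNorm_exponent_top]
  have hfin : eLpNormEssSup f μ ≠ ⊤ := by simpa only [eLpNorm_exponent_top] using hf.2.ne
  filter_upwards [ae_le_eLpNormEssSup (f := f) (μ := μ)] with x hx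
  simpa only [toReal_enorm, Real.norm_eq_abs] using ENNReal.toReal_mono hfin hx

lemma toReal_measure_abs_le_le_mul {α : Type*} [MeasurableSpace α] {μ : Measure α}
    {s : Set α} {g : α → ℝ} {C ε₀ δ : ℝ} (hs : μ s ≠ ⊤) (hε₀ : 0 < ε₀)
    (hnd : ∀ ε : ℝ, 0 < ε → ε < ε₀ → (μ {x ∈ s | |g x| ≤ ε}).toReal ≤ C * ε) (hδ : 0 ≤ δ) :
    (μ {x ∈ s | |g x| ≤ δ}).toReal ≤ max C ((μ s).toReal / ε₀) * δ := by
  have mono : ∀ {a b : ℝ}, a ≤ b →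
      (μ {x ∈ s | |g x| ≤ a}).toReal ≤ (μ {x ∈ s | |g x| ≤ b}).toReal := fun hab =>
    ENNReal.toReal_mono (measure_ne_top_of_subset (sep_subset _ _) hs)
      (measure_mono fun x hx => ⟨hx.1, hx.2.trans hab⟩)
  rcases lt_or_ge δ ε₀ with hδε₀ | hε₀δ
  · -- let the level `ε ∈ (δ, ε₀)` decrease to `δ`
    have hCδ : (μ {x ∈ s | |g x| ≤ δ}).toReal ≤ C * δ := by
      refine ge_of_tendsto (((continuous_const_mul C).tendsto δ).mono_left
        (nhdsWithin_le_nhds (s := Ioi δ))) ?_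
      filter_upwards [Ioo_mem_nhdsGT hδε₀] with ε hε
      exact (mono hε.1.le).trans (hnd ε (hδ.trans_lt hε.1) hε.2)
    exact hCδ.trans (mul_le_mul_of_nonneg_right (le_max_left _ _) hδ)
  · calc (μ {x ∈ s | |g x| ≤ δ}).toReal
        ≤ (μ s).toReal := ENNReal.toReal_mono hs (measure_mono (sep_subset _ _))
      _ = (μ s).toReal / ε₀ * ε₀ := (div_mul_cancel₀ _ hε₀.ne').symm
      _ ≤ (μ s).toReal / ε₀ * δ := by gcongr
      _ ≤ max C ((μ s).toReal / ε₀) * δ := by gcongr; exact le_max_right _ _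

lemma integral_abs_rpow_rpow_le_of_ae_eq_zero_off {α : Type*} [MeasurableSpace α]
    {μ : Measure α} {f : α → ℝ} {S : Set α} {b q : ℝ} (hq : 0 < q) (hb : 0 ≤ b)
    (hS : μ S ≠ ⊤) (hfb : ∀ᵐ x ∂μ, |f x| ≤ b) (hfS : ∀ᵐ x ∂μ, x ∉ S → f x = 0) :
    (∫ x, |f x| ^ q ∂μ) ^ (1 / q) ≤ b * (μ S).toReal ^ (1 / q) := by
  set T := toMeasurable μ S
  have hT : MeasurableSet T := measurableSet_toMeasurable μ S
  have hle : (fun x => |f x| ^ q) ≤ᵐ[μ] T.indicator fun _ => b ^ q := by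
    filter_upwards [hfb, hfS] with x hxb hxS
    by_cases hxT : x ∈ T
    · rw [indicator_of_mem hxT]
      exact Real.rpow_le_rpow (abs_nonneg _) hxb hq.le
    · rw [indicator_of_notMem hxT, hxS fun hx => hxT (subset_toMeasurable μ S hx), abs_zero,
        Real.zero_rpow hq.ne']
  have hint : ∫ x, |f x| ^ q ∂μ ≤ b ^ q * (μ S).toReal := by
    have hTint : Integrable (T.indicator fun _ => b ^ q) μ :=
      (integrable_indicator_iff hT).mpr
        (integrableOn_const (by rwa [measure_toMeasurable]))
    calc ∫ x, |f x| ^ q ∂μ ≤ ∫ x, T.indicator (fun _ => b ^ q) x ∂μ :=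
          integral_mono_of_nonneg (ae_of_all _ fun x => by positivity) hTint hle
      _ = b ^ q * (μ S).toReal := by
          rw [integral_indicator_const _ hT, measureReal_def, measure_toMeasurable, smul_eq_mul, mul_comm]
  calc (∫ x, |f x| ^ q ∂μ) ^ (1 / q)
      ≤ (b ^ q * (μ S).toReal) ^ (1 / q) :=
        Real.rpow_le_rpow (integral_nonneg fun x => by positivity) hint (by positivity)
    _ = b * (μ S).toReal ^ (1 / q) := by
        rw [Real.mul_rpow (by positivity) ENNReal.toReal_nonneg, ← Real.rpow_mul hb,
          mul_one_div_cancel hq.ne', Real.rpow_one]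

theorem budyko_strong_nondegeneracy_Lq_estimate_general
    (βi βw : ℝ) (hβ : βi < βw)
    (w : ℝ → ℝ) (hw : MemLp w ⊤ (volume.restrict (Ioo (-1 : ℝ) 1)))
    (C ε₀ : ℝ) (hε₀ : 0 < ε₀)
    (hnd : ∀ ε : ℝ, 0 < ε → ε < ε₀ →
      (volume {x ∈ Ioo (-1 : ℝ) 1 | |w x + 10| ≤ ε}).toReal ≤ C * ε)
    (q : ℝ) (hq : 1 ≤ q) :
    ∃ C' > 0, ∀ wh z zh : ℝ → ℝ,
      MemLp wh ⊤ (volume.restrict (Ioo (-1 : ℝ) 1)) →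
      (∀ᵐ x ∂(volume.restrict (Ioo (-1 : ℝ) 1)), z x ∈ budykoGraph βi βw (w x)) →
      (∀ᵐ x ∂(volume.restrict (Ioo (-1 : ℝ) 1)), zh x ∈ budykoGraph βi βw (wh x)) →
      (∫ x in Ioo (-1 : ℝ) 1, |z x - zh x| ^ q) ^ (1 / q)
        ≤ (βw - βi) *
          min (C' * ((eLpNorm (fun x => w x - wh x) ⊤
              (volume.restrict (Ioo (-1 : ℝ) 1))).toReal) ^ (1 / q))
            ((2 : ℝ) ^ (1 / q)) := by
  have hI : (volume (Ioo (-1 : ℝ) 1)).toReal = 2 := by norm_num [Real.volume_Ioo]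
  have hβ' : 0 ≤ βw - βi := sub_nonneg.mpr hβ.le
  refine ⟨max C (2 / ε₀) ^ (1 / q), Real.rpow_pos_of_pos (lt_max_of_lt_right (by positivity)) _, ?_⟩
  intro wh z zh hwh hz hzh
  set δ := (eLpNorm (fun x => w x - wh x) ⊤ (volume.restrict (Ioo (-1 : ℝ) 1))).toReal
  set S := {x ∈ Ioo (-1 : ℝ) 1 | |w x + 10| ≤ δ}
  have hS : volume.restrict (Ioo (-1 : ℝ) 1) S = volume S := by
    rw [Measure.restrict_apply' measurableSet_Ioo, inter_eq_left.mpr (sep_subset _ _)]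
  have hSfin : volume S ≠ ⊤ := measure_ne_top_of_subset (sep_subset _ _) measure_Ioo_lt_top.ne
  have hSK : (volume S).toReal ≤ max C (2 / ε₀) * δ := by
    simpa only [hI] using toReal_measure_abs_le_le_mul (g := fun x => w x + 10)
      measure_Ioo_lt_top.ne hε₀ hnd ENNReal.toReal_nonneg
  have hS2 : (volume S).toReal ≤ 2 :=
    hI ▸ ENNReal.toReal_mono measure_Ioo_lt_top.ne (measure_mono (sep_subset _ _))
  have hzb : ∀ᵐ x ∂(volume.restrict (Ioo (-1 : ℝ) 1)), |z x - zh x| ≤ βw - βi := by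
    filter_upwards [hz, hzh] with x hzx hzhx
    exact abs_sub_le_of_mem_budykoGraph hβ.le hzx hzhx
  have hzS : ∀ᵐ x ∂(volume.restrict (Ioo (-1 : ℝ) 1)), x ∉ S → z x - zh x = 0 := by
    filter_upwards [hz, hzh, ae_abs_le_toReal_eLpNorm_top (hw.sub hwh),
      ae_restrict_mem measurableSet_Ioo] with x hzx hzhx hwx hx hxS
    exact sub_eq_zero.mpr
      (eq_of_mem_budykoGraph_of_abs_sub_lt hzx hzhx hwx (not_le.mp fun h => hxS ⟨hx, h⟩))
  refine (integral_abs_rpow_rpow_le_of_ae_eq_zero_off (by linarith) hβ' (hS ▸ hSfin) hzb hzS).trans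
    (mul_le_mul_of_nonneg_left (le_min ?_ ?_) hβ')
  · rw [hS, ← Real.mul_rpow (by positivity) ENNReal.toReal_nonneg]
    exact Real.rpow_le_rpow ENNReal.toReal_nonneg hSK (by positivity)
  · rw [hS]
    exact Real.rpow_le_rpow ENNReal.toReal_nonneg hS2 (by positivity)

/-- If w ∈ L^∞(I), I = (-1,1), satisfies the strong nondegeneracy property
at level -10, then for any q ∈ [1,∞) there is C̃ > 0 such that for any
wh ∈ L^∞(I) and a.e. selections z ∈ β(w), zh ∈ β(wh) of the Heaviside-type
Budyko graph,
‖z - zh‖_{L^q} ≤ (βw - βi) min{C̃ ‖w - wh‖_∞^{1/q}, 2^{1/q}}. -/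
theorem budyko_strong_nondegeneracy_Lq_estimate
    (βi βw : ℝ) (hβi : 0 < βi) (hβ : βi < βw) (hβw : βw < 1)
    (w : ℝ → ℝ) (hw : MemLp w ⊤ (volume.restrict (Ioo (-1 : ℝ) 1)))
    (C ε₀ : ℝ) (hC : 0 < C) (hε₀ : 0 < ε₀)
    (hnd : ∀ ε : ℝ, 0 < ε → ε < ε₀ →
      (volume {x ∈ Ioo (-1 : ℝ) 1 | |w x + 10| ≤ ε}).toReal ≤ C * ε)
    (q : ℝ) (hq : 1 ≤ q) :
    ∃ C' > 0, ∀ wh z zh : ℝ → ℝ,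
      MemLp wh ⊤ (volume.restrict (Ioo (-1 : ℝ) 1)) →
      (∀ᵐ x ∂(volume.restrict (Ioo (-1 : ℝ) 1)), z x ∈ budykoGraph βi βw (w x)) →
      (∀ᵐ x ∂(volume.restrict (Ioo (-1 : ℝ) 1)), zh x ∈ budykoGraph βi βw (wh x)) →
      (∫ x in Ioo (-1 : ℝ) 1, |z x - zh x| ^ q) ^ (1 / q)
        ≤ (βw - βi) *
          min (C' * ((eLpNorm (fun x => w x - wh x) ⊤
              (volume.restrict (Ioo (-1 : ℝ) 1))).toReal) ^ (1 / q))
            ((2 : ℝ) ^ (1 / q)) :=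
  budyko_strong_nondegeneracy_Lq_estimate_general βi βw hβ w hw C ε₀ hε₀ hnd q hq
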